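/- arXiv:1807.00010 — 7 statements merged into one kernel-verified Lean document; each statement's English description precedes it below -/
import Mathlib

section
/- Let σ = (Z, P) be a stability condition on a triangulated category D. If gldim σ ≤ 1 (where gldim σ = sup{φ₂ - φ₁ : Hom(P(φ₁), P(φ₂)) ≠ 0}), then every indecomposable object of D is semistable with respect to σ. -/
open CategoryTheory CategoryTheory.Limits CategoryTheory.Pretriangulated

universe v u

variable (C : Type u) [Category.{v} C] [Preadditive C] [HasZeroObject C]
  [HasShift C ℤ] [∀ n : ℤ, (shiftFunctor C n).Additive] [Pretriangulated C]
  [HasFiniteBiproducts C]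

/-- A Bridgeland stability condition, encoded by a central charge on objects and a slicing. -/
structure StabilityCondition where
  Z : C → ℂ
  P : ℝ → Set C
  mem_of_iso : ∀ {φ : ℝ} {E F : C}, (E ≅ F) → E ∈ P φ → F ∈ P φ
  charge : ∀ {φ : ℝ} {E : C}, E ∈ P φ → ¬ IsZero E →
    ∃ m : ℝ, 0 < m ∧ Z E = (m : ℂ) * Complex.exp (Real.pi * φ * Complex.I)
  shift_mem : ∀ (φ : ℝ) (E : C), E ∈ P φ ↔ E⟦(1 : ℤ)⟧ ∈ P (φ + 1)
  sum_mem : ∀ {φ : ℝ} {X Y : C}, X ∈ P φ → Y ∈ P φ → (X ⊞ Y) ∈ P φ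
  summand_mem : ∀ {φ : ℝ} {X Y : C}, (X ⊞ Y) ∈ P φ → X ∈ P φ
  hom_zero : ∀ {φ₁ φ₂ : ℝ}, φ₂ < φ₁ → ∀ {E F : C}, E ∈ P φ₁ → F ∈ P φ₂ →
    ∀ f : E ⟶ F, f = 0
  HN : ∀ E : C, ¬ IsZero E → ∃ (n : ℕ) (obj : Fin (n + 1) → C) (φ : Fin n → ℝ),
    IsZero (obj 0) ∧ Nonempty (obj (Fin.last n) ≅ E) ∧ StrictAnti φ ∧
    ∀ i : Fin n, ∃ (A : C) (f : obj i.castSucc ⟶ obj i.succ) (g : obj i.succ ⟶ A)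
      (h : A ⟶ (obj i.castSucc)⟦(1 : ℤ)⟧),
      (Triangle.mk f g h ∈ distTriang C) ∧ A ∈ P (φ i) ∧ ¬ IsZero A

variable {C}

/-- `E` is semistable iff it lies in some slice. -/
def StabilityCondition.IsSemistable (σ : StabilityCondition C) (E : C) : Prop :=
  ∃ φ : ℝ, E ∈ σ.P φ

/-- The global dimension of a stability condition. -/
noncomputable def StabilityCondition.gldim (σ : StabilityCondition C) : EReal :=
  sSup {d : EReal | ∃ (φ₁ φ₂ : ℝ) (E F : C) (f : E ⟶ F),
    E ∈ σ.P φ₁ ∧ F ∈ σ.P φ₂ ∧ f ≠ 0 ∧ d = ((φ₂ - φ₁ : ℝ) : EReal)}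

/-- An object is indecomposable if it is nonzero and any biproduct decomposition is trivial. -/
def IsIndec (E : C) : Prop :=
  ¬ IsZero E ∧ ∀ (X Y : C), (E ≅ X ⊞ Y) → IsZero X ∨ IsZero Y

/-- `E` is stable of phase `φ`: it is a nonzero object of `P(φ)` admitting no nontrivial
extension decomposition inside `P(φ)` (i.e. it is simple in the abelian category `P(φ)`). -/
def StabilityCondition.IsStableOfPhase (σ : StabilityCondition C) (E : C) (φ : ℝ) : Prop :=
  E ∈ σ.P φ ∧ ¬ IsZero E ∧ ∀ (A B : C) (f : A ⟶ E) (g : E ⟶ B) (h : B ⟶ A⟦(1 : ℤ)⟧),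
    (Triangle.mk f g h ∈ distTriang C) → A ∈ σ.P φ → B ∈ σ.P φ →
    ¬ IsZero A → ¬ IsZero B → False

/-- The Krull–Schmidt property: every nonzero object is a finite biproduct of indecomposables. -/
def KrullSchmidt : Prop :=
  ∀ X : C, ¬ IsZero X → ∃ (m : ℕ) (f : Fin m → C),
    (∀ i, IsIndec (f i)) ∧ Nonempty (X ≅ ⨁ f)

/- Take the Harder–Narasimhan filtration `0 = E₀ → ⋯ → Eₙ ≅ E` with factors `Aᵢ`
of strictly decreasing phases `φᵢ`. For `i < n - 1` the phases of `Aₙ₋₁` and `Aᵢ[1]` differ by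
`φᵢ + 1 - φₙ₋₁ > 1`, so `gldim σ ≤ 1` kills `Hom(Aₙ₋₁, Aᵢ[1])`; since the `Eₖ[1]` are iterated
extensions of these, the connecting map `Aₙ₋₁ → Eₙ₋₁[1]` vanishes. The last triangle therefore
splits, `E ≅ Eₙ₋₁ ⊞ Aₙ₋₁`, and indecomposability forces `E ≅ Aₙ₋₁`. -/

section

omit [HasFiniteBiproducts C]

lemma hom_obj₂_eq_zero_of_distTriang {T : Triangle C} (hT : T ∈ distTriang C) {A : C}
    (h₁ : ∀ u : A ⟶ T.obj₁, u = 0) (h₃ : ∀ u : A ⟶ T.obj₃, u = 0) (u : A ⟶ T.obj₂) : u = 0 := by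
  obtain ⟨v, rfl⟩ := T.coyoneda_exact₂ hT u (h₃ _)
  rw [h₁ v, zero_comp]

lemma hom_shift_eq_zero_of_filtration {A : C} (a : ℤ) {n : ℕ} {obj : Fin (n + 1) → C}
    (h₀ : IsZero (obj 0))
    (hstep : ∀ i : Fin n, ∃ (B : C) (f : obj i.castSucc ⟶ obj i.succ) (g : obj i.succ ⟶ B)
      (δ : B ⟶ (obj i.castSucc)⟦(1 : ℤ)⟧), Triangle.mk f g δ ∈ distTriang C ∧
        ∀ u : A ⟶ B⟦a⟧, u = 0)
    (k : Fin (n + 1)) (u : A ⟶ (obj k)⟦a⟧) : u = 0 := by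
  induction k using Fin.induction with
  | zero => exact ((shiftFunctor C a).map_isZero h₀).eq_of_tgt u 0
  | succ i ih =>
    obtain ⟨B, f, g, δ, hT, hB⟩ := hstep i
    exact hom_obj₂_eq_zero_of_distTriang (Triangle.shift_distinguished _ hT a) ih hB u

lemma StabilityCondition.hom_eq_zero_of_gldim_le_one {σ : StabilityCondition C}
    (h : σ.gldim ≤ 1) {φ₁ φ₂ : ℝ} (hφ : 1 < φ₂ - φ₁) {E F : C} (hE : E ∈ σ.P φ₁)
    (hF : F ∈ σ.P φ₂) (f : E ⟶ F) : f = 0 := by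
  by_contra hf
  have : ((φ₂ - φ₁ : ℝ) : EReal) ≤ 1 := sSup_le_iff.1 h _ ⟨φ₁, φ₂, E, F, f, hE, hF, hf, rfl⟩
  exact (EReal.coe_le_coe_iff.1 this).not_gt hφ

end

/-- If `gldim σ ≤ 1` then every indecomposable object is semistable. -/
theorem gldim_le_one_totally_semistable (σ : StabilityCondition C)
    (h : σ.gldim ≤ 1) :
    ∀ E : C, IsIndec E → σ.IsSemistable E := by
  rintro E ⟨hE, hsplit⟩
  obtain ⟨n, obj, φ, h₀, ⟨e⟩, hφ, hstep⟩ := σ.HN E hE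
  cases n with
  | zero => exact absurd (h₀.of_iso e.symm) hE
  | succ m =>
    obtain ⟨A, f, g, δ, hT, hA, hA₀⟩ := hstep (Fin.last m)
    have hδ : δ = 0 := by
      refine hom_shift_eq_zero_of_filtration (obj := obj ∘ Fin.castSucc) 1 h₀
        (fun i ↦ ?_) (Fin.last m) δ
      obtain ⟨B, f', g', δ', hT', hB, -⟩ := hstep i.castSucc
      have hgap : 1 < (φ i.castSucc + 1) - φ (Fin.last m) := by
        linarith [hφ (Fin.castSucc_lt_last i)]
      exact ⟨B, f', g', δ', hT', σ.hom_eq_zero_of_gldim_le_one h hgap hA ((σ.shift_mem _ _).1 hB)⟩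
    obtain ⟨e', -, -⟩ := exists_iso_binaryBiproduct_of_distTriang _ hT hδ
    rcases hsplit _ _ (e.symm ≪≫ e') with hlow | hA'
    · exact ⟨_, σ.mem_of_iso (isoZeroBiprod hlow ≪≫ e'.symm ≪≫ e) hA⟩
    · exact absurd hA' hA₀
end

section
/- Let σ = (Z, P) be a stability condition on a triangulated category D. If gldim σ < 1, then every indecomposable object of D is stable with respect to σ (i.e., every semistable object of any phase φ is a simple object of the abelian category P(φ)). -/
open CategoryTheory CategoryTheory.Limits CategoryTheory.Pretriangulated

universe v u

variable (C : Type u) [Category.{v} C] [Preadditive C] [HasZeroObject C]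
  [HasShift C ℤ] [∀ n : ℤ, (shiftFunctor C n).Additive] [Pretriangulated C]
  [HasFiniteBiproducts C]

variable {C}

/-! Since `gldim σ < 1`, there are no nonzero maps `P(ψ) → P(φ)[1]` for `ψ ≤ φ`. So a
distinguished triangle `A → E → B → A[1]` with `A, B ∈ P(φ)` splits, and an indecomposable
`E ∈ P(φ)` is stable. For an arbitrary indecomposable `E`, the same vanishing, propagated along the
HN filtration, splits its last triangle `Eₙ₋₁ → E → Aₙ → Eₙ₋₁[1]`, because `Aₙ` has the smallest
phase; hence `Eₙ₋₁ = 0` and `E ≅ Aₙ` is semistable. -/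

section

variable {D : Type*} [Category D] [Preadditive D] [HasZeroObject D] [HasShift D ℤ]
  [∀ n : ℤ, (shiftFunctor D n).Additive] [Pretriangulated D]

lemma IsIndec.of_iso {E F : D} (e : E ≅ F) (hE : IsIndec E) : IsIndec F :=
  ⟨fun hF => hE.1 (hF.of_iso e), fun X Y e' => hE.2 X Y (e ≪≫ e')⟩

lemma IsIndec.isZero₁_or_isZero₃ {T : Triangle D} (hT₂ : IsIndec T.obj₂)
    (hT : T ∈ distTriang D) (h₃ : T.mor₃ = 0) : IsZero T.obj₁ ∨ IsZero T.obj₃ :=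
  have ⟨e, _⟩ := exists_iso_binaryBiproduct_of_distTriang T hT h₃
  hT₂.2 _ _ e

lemma CategoryTheory.Pretriangulated.hom_shift_eq_zero_of_filtration
    {n : ℕ} {X : Fin (n + 1) → D} (hX₀ : IsZero (X 0)) {S : D}
    (step : ∀ i : Fin n, ∃ (A : D) (f : X i.castSucc ⟶ X i.succ) (g : X i.succ ⟶ A)
      (h : A ⟶ (X i.castSucc)⟦(1 : ℤ)⟧),
      Triangle.mk f g h ∈ distTriang D ∧ ∀ u : S ⟶ A⟦(1 : ℤ)⟧, u = 0)
    (j : Fin (n + 1)) (u : S ⟶ (X j)⟦(1 : ℤ)⟧) : u = 0 := by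
  induction j using Fin.induction with
  | zero => exact ((shiftFunctor D (1 : ℤ)).map_isZero hX₀).eq_zero_of_tgt u
  | succ i ih =>
    obtain ⟨A, f, g, h, hT, hA⟩ := step i
    obtain ⟨v, hv⟩ := Triangle.coyoneda_exact₁ _ (rot_of_distTriang _ hT) u (hA _)
    rw [hv, ih v]
    exact zero_comp

namespace StabilityCondition

variable (σ : StabilityCondition D)

lemma hom_eq_zero_of_one_le_sub (h : σ.gldim < 1) {φ₁ φ₂ : ℝ} (hφ : 1 ≤ φ₂ - φ₁) {E F : D}
    (hE : E ∈ σ.P φ₁) (hF : F ∈ σ.P φ₂) (f : E ⟶ F) : f = 0 := by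
  by_contra hf
  have hle : ((φ₂ - φ₁ : ℝ) : EReal) ≤ σ.gldim := le_sSup ⟨φ₁, φ₂, E, F, f, hE, hF, hf, rfl⟩
  exact h.not_ge (le_trans (by exact_mod_cast hφ) hle)

lemma hom_shift_eq_zero_of_le (h : σ.gldim < 1) {ψ φ : ℝ} (hψφ : ψ ≤ φ) {S A : D}
    (hS : S ∈ σ.P ψ) (hA : A ∈ σ.P φ) (u : S ⟶ A⟦(1 : ℤ)⟧) : u = 0 :=
  σ.hom_eq_zero_of_one_le_sub h (by linarith) hS ((σ.shift_mem φ A).1 hA) u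

lemma isSemistable_of_isIndec (h : σ.gldim < 1) {E : D} (hE : IsIndec E) : σ.IsSemistable E := by
  obtain ⟨n, X, φ, hX₀, ⟨e⟩, hφ, step⟩ := σ.HN E hE.1
  cases n with
  | zero => exact absurd (hX₀.of_iso e.symm) hE.1
  | succ k =>
    obtain ⟨A, f, g, u, hT, hA, hA₀⟩ := step (Fin.last k)
    have hu : u = 0 := Pretriangulated.hom_shift_eq_zero_of_filtration hX₀
      (fun i => (step i).imp fun B ⟨f, g, u, hT, hB, _⟩ =>
        ⟨f, g, u, hT, σ.hom_shift_eq_zero_of_le h (hφ.antitone (Fin.le_last i)) hA hB⟩)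
      _ u
    have e' : X (Fin.last k).succ ≅ E := by rw [Fin.succ_last]; exact e
    have hX : IsZero (X (Fin.last k).castSucc) :=
      ((hE.of_iso e'.symm).isZero₁_or_isZero₃ hT hu).resolve_right hA₀
    have : IsIso g := (Triangle.isZero₁_iff_isIso₂ _ hT).1 hX
    exact ⟨φ (Fin.last k), σ.mem_of_iso ((asIso g).symm ≪≫ e') hA⟩

lemma isStableOfPhase_of_isIndec (h : σ.gldim < 1) {E : D} (hE : IsIndec E) {φ : ℝ}
    (hφ : E ∈ σ.P φ) : σ.IsStableOfPhase E φ := by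
  refine ⟨hφ, hE.1, fun A B f g u hT hA hB hA₀ hB₀ => ?_⟩
  have hu : u = 0 := σ.hom_shift_eq_zero_of_le h le_rfl hB hA u
  exact (hE.isZero₁_or_isZero₃ hT hu).elim hA₀ hB₀

end StabilityCondition

end

/-- If `gldim σ < 1` then every indecomposable object is stable. -/
theorem gldim_lt_one_totally_stable (σ : StabilityCondition C)
    (h : σ.gldim < 1) :
    ∀ E : C, IsIndec E → ∃ φ : ℝ, σ.IsStableOfPhase E φ := by
  intro E hE
  obtain ⟨φ, hφ⟩ := σ.isSemistable_of_isIndec h hE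
  exact ⟨φ, σ.isStableOfPhase_of_isIndec h hE hφ⟩
end

section
/- Let σ be a stability condition on a triangulated (Krull–Schmidt) category D such that every indecomposable object is semistable. Then gldim σ ≤ 1. -/
/-!
Suppose `f : E ⟶ F` is nonzero with `E ∈ P(φ₁)`, `F ∈ P(φ₂)` and `φ₂ > φ₁ + 1`, and complete it
to a triangle `E ⟶ F ⟶ M ⟶ E⟦1⟧`. Split `M` into indecomposables, each semistable of some phase
`ψ`. If `ψ ≤ φ₁ + 1 < φ₂`, the summand receives no nonzero map from `F`; otherwise it sends no
nonzero map to `E⟦1⟧ ∈ P(φ₁ + 1)`. Projecting onto the summands of the second kind yields an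
endomorphism of `M` fixing `F ⟶ M` and killing `M ⟶ E⟦1⟧`, which makes `F ⟶ M` a split mono
(using `Hom(F, E) = 0`). Hence `f = 0`.
-/

open CategoryTheory CategoryTheory.Limits CategoryTheory.Pretriangulated

universe v u

variable (C : Type u) [Category.{v} C] [Preadditive C] [HasZeroObject C]
  [HasShift C ℤ] [∀ n : ℤ, (shiftFunctor C n).Additive] [Pretriangulated C]
  [HasFiniteBiproducts C]

variable {C}

theorem CategoryTheory.Preadditive.exists_comp_eq_self_and_comp_eq_zero_of_sum_eq_id
    {D : Type*} [Category D] [Preadditive D] {ι : Type*} [Fintype ι] {A : ι → D} {M F X : D}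
    (q : ∀ i, M ⟶ A i) (j : ∀ i, A i ⟶ M) (hqj : ∑ i, q i ≫ j i = 𝟙 M)
    (g : F ⟶ M) (w : M ⟶ X) (h : ∀ i, g ≫ q i = 0 ∨ j i ≫ w = 0) :
    ∃ P : M ⟶ M, g ≫ P = g ∧ P ≫ w = 0 := by
  classical
  refine ⟨∑ i with g ≫ q i ≠ 0, q i ≫ j i, ?_, ?_⟩
  · calc g ≫ ∑ i with g ≫ q i ≠ 0, q i ≫ j i = ∑ i, g ≫ q i ≫ j i := by
          rw [Preadditive.comp_sum]
          refine Finset.sum_filter_of_ne fun i _ hi hgq => hi ?_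
          rw [← Category.assoc, hgq, zero_comp]
      _ = g := by rw [← Preadditive.comp_sum, hqj, Category.comp_id]
  · rw [Preadditive.sum_comp]
    refine Finset.sum_eq_zero fun i hi => ?_
    rw [Finset.mem_filter] at hi
    rw [Category.assoc, (h i).resolve_left hi.2, comp_zero]

theorem CategoryTheory.Pretriangulated.isSplitMono_mor₂_of_comp_eq_self
    {D : Type*} [Category D] [Preadditive D] [HasZeroObject D] [HasShift D ℤ]
    [∀ n : ℤ, (shiftFunctor D n).Additive] [Pretriangulated D]
    {T : Triangle D} (hT : T ∈ distTriang D) (hHom : ∀ b : T.obj₂ ⟶ T.obj₁, b = 0)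
    (P : T.obj₃ ⟶ T.obj₃) (hP : T.mor₂ ≫ P = T.mor₂) (hPw : P ≫ T.mor₃ = 0) :
    IsSplitMono T.mor₂ := by
  obtain ⟨R, rfl⟩ := T.coyoneda_exact₃ hT P hPw
  obtain ⟨b, hb⟩ := T.coyoneda_exact₂ hT (𝟙 _ - T.mor₂ ≫ R)
    (by rw [Preadditive.sub_comp, Category.assoc, hP, Category.id_comp, sub_self])
  rw [hHom b, zero_comp, sub_eq_zero] at hb
  exact IsSplitMono.mk' ⟨R, hb.symm⟩

theorem KrullSchmidt.exists_sum_eq_id (hKS : KrullSchmidt (C := C)) (X : C) :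
    ∃ (m : ℕ) (A : Fin m → C) (q : ∀ i, X ⟶ A i) (j : ∀ i, A i ⟶ X),
      (∀ i, IsIndec (A i)) ∧ ∑ i, q i ≫ j i = 𝟙 X := by
  by_cases hX : IsZero X
  · exact ⟨0, Fin.elim0, fun i => i.elim0, fun i => i.elim0, fun i => i.elim0, hX.eq_of_src _ _⟩
  obtain ⟨m, A, hA, ⟨e⟩⟩ := hKS X hX
  refine ⟨m, A, fun i => e.hom ≫ biproduct.π A i, fun i => biproduct.ι A i ≫ e.inv, hA, ?_⟩
  calc ∑ i, (e.hom ≫ biproduct.π A i) ≫ biproduct.ι A i ≫ e.inv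
      = e.hom ≫ (∑ i, biproduct.π A i ≫ biproduct.ι A i) ≫ e.inv := by
        simp only [Preadditive.comp_sum, Preadditive.sum_comp, Category.assoc]
    _ = 𝟙 X := by rw [biproduct.total, Category.id_comp, Iso.hom_inv_id]

theorem StabilityCondition.phase_sub_le_one_of_ne_zero (σ : StabilityCondition C)
    (hKS : KrullSchmidt (C := C)) (htot : ∀ E : C, IsIndec E → σ.IsSemistable E)
    {φ₁ φ₂ : ℝ} {E F : C} (hE : E ∈ σ.P φ₁) (hF : F ∈ σ.P φ₂) {f : E ⟶ F} (hf : f ≠ 0) :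
    φ₂ - φ₁ ≤ 1 := by
  by_contra! hgt
  obtain ⟨M, g, w, hT⟩ := distinguished_cocone_triangle f
  obtain ⟨m, A, q, j, hA, hqj⟩ := hKS.exists_sum_eq_id M
  have hsplit : ∀ i, g ≫ q i = 0 ∨ j i ≫ w = 0 := fun i => by
    obtain ⟨ψ, hψ⟩ := htot (A i) (hA i)
    rcases le_or_gt ψ (φ₁ + 1) with hle | hlt
    · exact .inl (σ.hom_zero (by linarith) hF hψ _)
    · exact .inr (σ.hom_zero hlt hψ ((σ.shift_mem φ₁ E).mp hE) _)
  obtain ⟨P, hgP, hPw⟩ :=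
    Preadditive.exists_comp_eq_self_and_comp_eq_zero_of_sum_eq_id q j hqj g w hsplit
  have hg : IsSplitMono g :=
    isSplitMono_mor₂_of_comp_eq_self hT (σ.hom_zero (by linarith) hF hE) P hgP hPw
  exact hf (Triangle.mor₁_eq_zero_of_mono₂ _ hT (IsSplitMono.mono g))

/-- In a Krull–Schmidt triangulated category, if every indecomposable object is
semistable then `gldim σ ≤ 1`. -/
theorem gldim_le_one_of_totally_semistable (hKS : KrullSchmidt (C := C))
    (σ : StabilityCondition C)
    (htot : ∀ E : C, IsIndec E → σ.IsSemistable E) :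
    σ.gldim ≤ 1 := by
  refine sSup_le ?_
  rintro _ ⟨φ₁, φ₂, E, F, f, hE, hF, hf, rfl⟩
  exact_mod_cast σ.phase_sub_le_one_of_ne_zero hKS htot hE hF hf
end

section
/- Let D be a triangulated category with Serre functor S, and let σ = (Z, P) be a stability condition on D such that S is σ-semistable with phase φ_σ(S) = s, i.e., S preserves the set of semistable objects and φ_σ(S(E)) = φ_σ(E) + s for every semistable E. Then gldim σ = s. -/
open CategoryTheory CategoryTheory.Limits CategoryTheory.Pretriangulated

universe v u

variable (C : Type u) [Category.{v} C] [Preadditive C] [HasZeroObject C]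
  [HasShift C ℤ] [∀ n : ℤ, (shiftFunctor C n).Additive] [Pretriangulated C]
  [HasFiniteBiproducts C]

variable {C}

/-- If the Serre functor `S` is `σ`-semistable with phase `s`, then `gldim σ = s`. -/
theorem gldim_eq_phase_of_serre (K : Type*) [Field K] [CategoryTheory.Linear K C]
    (σ : StabilityCondition C) (S : C ⥤ C) [S.IsEquivalence]
    (hSerre : ∀ L M : C, Nonempty ((L ⟶ M) ≃ₗ[K] Module.Dual K (M ⟶ S.obj L)))
    (s : ℝ)
    (hS : ∀ (φ : ℝ) (E : C), E ∈ σ.P φ → S.obj E ∈ σ.P (φ + s))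
    (hne : ∃ E : C, ¬ IsZero E) :
    σ.gldim = (s : EReal) := by
  apply le_antisymm
  · apply sSup_le
    rintro d ⟨φ₁, φ₂, E, F, f, hE, hF, hf, rfl⟩
    have hle : φ₂ - φ₁ ≤ s := by
      by_contra hlt
      push_neg at hlt
      obtain ⟨e⟩ := hSerre E F
      apply hf
      have hzero : ∀ g : F ⟶ S.obj E, g = 0 := fun g =>
        σ.hom_zero (by linarith) hF (hS φ₁ E hE) g
      have : e f = 0 := by
        ext g
        rw [hzero g]
        simp
      have := congrArg e.symm this
      simpa using this
    exact_mod_cast hle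
  · -- find a nonzero semistable object
    obtain ⟨E₀, hE₀⟩ := hne
    obtain ⟨n, obj, φ, hzero, ⟨iso⟩, -, htri⟩ := σ.HN E₀ hE₀
    cases n with
    | zero => exact absurd (hzero.of_iso iso.symm) hE₀
    | succ m =>
      obtain ⟨A, f, g, h, -, hA, hAne⟩ := htri 0
      obtain ⟨e⟩ := hSerre A A
      have hid : (𝟙 A : A ⟶ A) ≠ 0 := fun h0 =>
        hAne ((Limits.IsZero.iff_id_eq_zero A).2 h0)
      have heA : e (𝟙 A) ≠ 0 := fun h0 => hid (by simpa using congrArg e.symm h0)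
      obtain ⟨u, hu⟩ : ∃ u : A ⟶ S.obj A, e (𝟙 A) u ≠ 0 := by
        by_contra hc
        push_neg at hc
        exact heA (by ext u; simpa using hc u)
      have hune : u ≠ 0 := fun h0 => hu (by rw [h0]; simp)
      apply le_sSup
      refine ⟨φ 0, φ 0 + s, A, S.obj A, u, hA, hS _ _ hA, hune, ?_⟩
      norm_num
end

section
/- Let D be a Calabi–Yau-N triangulated category (i.e., the shift [N] is a Serre functor) for some integer N ≥ 1. Then gldim σ = N for every stability condition σ on D. -/
open CategoryTheory CategoryTheory.Limits CategoryTheory.Pretriangulated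

universe v u

variable (C : Type u) [Category.{v} C] [Preadditive C] [HasZeroObject C]
  [HasShift C ℤ] [∀ n : ℤ, (shiftFunctor C n).Additive] [Pretriangulated C]
  [HasFiniteBiproducts C]

variable {C}

lemma StabilityCondition.mem_shift_nat (σ : StabilityCondition C) (n : ℕ) {φ : ℝ} {E : C}
    (h : E ∈ σ.P φ) : E⟦(n : ℤ)⟧ ∈ σ.P (φ + n) := by
  induction n with
  | zero =>
    simpa using σ.mem_of_iso ((shiftFunctorZero C ℤ).symm.app E) h
  | succ n ih =>
    have h1 := (σ.shift_mem (φ + n) _).mp ih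
    have iso : (E⟦(n : ℤ)⟧)⟦(1 : ℤ)⟧ ≅ E⟦((n + 1 : ℕ) : ℤ)⟧ :=
      ((shiftFunctorAdd' C (n : ℤ) 1 ((n + 1 : ℕ) : ℤ) (by push_cast; ring)).app E).symm
    have hφ : φ + ((n + 1 : ℕ) : ℝ) = φ + n + 1 := by push_cast; ring
    rw [hφ]
    exact σ.mem_of_iso iso h1

lemma exists_hom_ne_zero_serre {K : Type*} [Field K] [CategoryTheory.Linear K C]
    {N : ℤ}
    (hSerre : ∀ L M : C, Nonempty ((L ⟶ M) ≃ₗ[K] Module.Dual K (M ⟶ L⟦N⟧)))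
    {E F : C} (f : E ⟶ F) (hf : f ≠ 0) : ∃ g : F ⟶ E⟦N⟧, g ≠ 0 := by
  obtain ⟨e⟩ := hSerre E F
  by_contra h
  push_neg at h
  apply hf
  have : e f = 0 := by
    ext g
    rw [h g]
    simp
  have := congrArg e.symm this
  simpa using this

/-- If `D` is Calabi–Yau-`N` (the shift `[N]` is a Serre functor) with `N ≥ 1`,
then `gldim σ = N` for every stability condition `σ`. -/
theorem gldim_eq_of_calabiYau (K : Type*) [Field K] [CategoryTheory.Linear K C]
    (N : ℤ) (hN : 1 ≤ N)
    (hSerre : ∀ L M : C, Nonempty ((L ⟶ M) ≃ₗ[K] Module.Dual K (M ⟶ L⟦N⟧)))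
    (hne : ∃ E : C, ¬ IsZero E) :
    ∀ σ : StabilityCondition C, σ.gldim = ((N : ℝ) : EReal) := by
  intro σ
  -- find a nonzero semistable object
  obtain ⟨E0, hE0⟩ := hne
  obtain ⟨n, obj, φf, hz, ⟨isoE⟩, -, hfac⟩ := σ.HN E0 hE0
  obtain ⟨A, φ, hA, hAnz⟩ : ∃ (A : C) (φ : ℝ), A ∈ σ.P φ ∧ ¬ IsZero A := by
    cases n with
    | zero => exact absurd (hz.of_iso isoE.symm) hE0
    | succ m =>
      obtain ⟨A, f, g, h, -, hA, hnz⟩ := hfac 0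
      exact ⟨A, _, hA, hnz⟩
  -- A⟦N⟧ lies in P (φ + N)
  set n0 := N.toNat with hn0
  have hN0 : (n0 : ℤ) = N := Int.toNat_of_nonneg (by omega)
  have hNr : (n0 : ℝ) = (N : ℝ) := by exact_mod_cast congrArg (Int.cast : ℤ → ℝ) hN0
  have hAN : A⟦N⟧ ∈ σ.P (φ + (N : ℝ)) := by
    have := σ.mem_shift_nat n0 hA
    rw [hN0, hNr] at this
    exact this
  -- a nonzero morphism A ⟶ A⟦N⟧
  have hid : (𝟙 A : A ⟶ A) ≠ 0 := fun h => hAnz ((IsZero.iff_id_eq_zero A).mpr h)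
  obtain ⟨g, hg⟩ := exists_hom_ne_zero_serre hSerre (𝟙 A) hid
  apply le_antisymm
  · -- upper bound
    apply sSup_le
    rintro d ⟨φ₁, φ₂, E, F, f, hE, hF, hf, rfl⟩
    rw [EReal.coe_le_coe_iff]
    by_contra hlt
    push_neg at hlt
    obtain ⟨g', hg'⟩ := exists_hom_ne_zero_serre hSerre f hf
    have hEN : E⟦N⟧ ∈ σ.P (φ₁ + (N : ℝ)) := by
      have := σ.mem_shift_nat n0 hE
      rw [hN0, hNr] at this
      exact this
    exact hg' (σ.hom_zero (by linarith) hF hEN g')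
  · -- lower bound
    apply le_sSup
    exact ⟨φ, φ + (N : ℝ), A, A⟦N⟧, g, hA, hAN, hg, by norm_num⟩
end

section
/- Let Q be a Dynkin quiver with Coxeter number h, and let σ be a stability condition on D^b(kQ) such that the Serre functor S = τ∘[1] satisfies S(σ) = (1 − 2/h)·σ (equivalently the Auslander–Reiten translate τ satisfies τ(σ) = (−2/h)·σ). Then gldim σ ≤ 1 − 2/h. -/
open CategoryTheory CategoryTheory.Limits CategoryTheory.Pretriangulated

universe v u

variable (C : Type u) [Category.{v} C] [Preadditive C] [HasZeroObject C]
  [HasShift C ℤ] [∀ n : ℤ, (shiftFunctor C n).Additive] [Pretriangulated C]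
  [HasFiniteBiproducts C]

variable {C}

/-- If the Serre functor `S` of `D^b(kQ)` (for `Q` Dynkin with Coxeter number `h`)
satisfies the Gepner equation `S(σ) = (1 - 2/h)·σ`, then `gldim σ ≤ 1 - 2/h`. -/
theorem gldim_le_of_gepner (K : Type*) [Field K] [CategoryTheory.Linear K C]
    (h : ℕ) (hh : 2 ≤ h)
    (σ : StabilityCondition C) (S : C ⥤ C) [S.IsEquivalence]
    (hSerre : ∀ L M : C, Nonempty ((L ⟶ M) ≃ₗ[K] Module.Dual K (M ⟶ S.obj L)))
    (hGep : ∀ (φ : ℝ) (E : C), E ∈ σ.P φ ↔ S.obj E ∈ σ.P (φ + (1 - 2 / h))) :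
    σ.gldim ≤ ((1 - 2 / h : ℝ) : EReal) := by
  apply sSup_le
  rintro d ⟨φ₁, φ₂, E, F, f, hE, hF, hf, rfl⟩
  have key : φ₂ - φ₁ ≤ 1 - 2 / h := by
    by_contra hlt
    push_neg at hlt
    have hSE : S.obj E ∈ σ.P (φ₁ + (1 - 2 / h)) := (hGep φ₁ E).mp hE
    obtain ⟨e⟩ := hSerre E F
    have hef : e f ≠ 0 := fun h0 => hf (e.injective (by simp [h0]))
    obtain ⟨g, hg⟩ : ∃ g : F ⟶ S.obj E, e f g ≠ 0 := by
      by_contra hc; push_neg at hc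
      exact hef (LinearMap.ext fun g => hc g)
    have hg0 : g = 0 := σ.hom_zero (by linarith) hF hSE g
    rw [hg0] at hg
    exact hg (map_zero _)
  exact_mod_cast EReal.coe_le_coe_iff.mpr key
end

section
/- Let Q be a Dynkin quiver with Coxeter number h and let σ_G be the Kajiura–Saito–Takahashi stability condition on D^b(kQ), which satisfies the Gepner equation τ(σ_G) = (−2/h)·σ_G for the Auslander–Reiten functor τ. Then gldim σ_G = 1 − 2/h. -/
open CategoryTheory CategoryTheory.Limits CategoryTheory.Pretriangulated

universe v u

variable (C : Type u) [Category.{v} C] [Preadditive C] [HasZeroObject C]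
  [HasShift C ℤ] [∀ n : ℤ, (shiftFunctor C n).Additive] [Pretriangulated C]
  [HasFiniteBiproducts C]

variable {C}

/-- The Kajiura–Saito–Takahashi stability condition `σ_G`, satisfying the Gepner
equation `τ(σ_G) = (-2/h)·σ_G` (equivalently `S(σ_G) = (1 - 2/h)·σ_G` for the Serre
functor `S = [1] ∘ τ`), has `gldim σ_G = 1 - 2/h`. -/
theorem gldim_gepner_point (K : Type*) [Field K] [CategoryTheory.Linear K C]
    (h : ℕ) (hh : 2 ≤ h)
    (σ : StabilityCondition C) (S : C ⥤ C) [S.IsEquivalence]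
    (hSerre : ∀ L M : C, Nonempty ((L ⟶ M) ≃ₗ[K] Module.Dual K (M ⟶ S.obj L)))
    (hGepSlicing : ∀ (φ : ℝ) (E : C), E ∈ σ.P φ ↔ S.obj E ∈ σ.P (φ + (1 - 2 / h)))
    (hGepCharge : ∀ E : C,
      σ.Z (S.obj E) = Complex.exp (Real.pi * (1 - 2 / h) * Complex.I) * σ.Z E)
    (hne : ∃ E : C, ¬ IsZero E) :
    σ.gldim = ((1 - 2 / h : ℝ) : EReal) := by
  classical
  obtain ⟨E, hE⟩ := hne
  obtain ⟨n, obj, φs, h0, ⟨iso⟩, -, htri⟩ := σ.HN E hE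
  obtain ⟨A, φ, hA, hAne⟩ : ∃ (A : C) (φ : ℝ), A ∈ σ.P φ ∧ ¬ IsZero A := by
    cases n with
    | zero => exact absurd (h0.of_iso iso.symm) hE
    | succ m =>
      obtain ⟨A, f, g, hh', -, hAmem, hAne⟩ := htri 0
      exact ⟨A, φs 0, hAmem, hAne⟩
  have hSA : S.obj A ∈ σ.P (φ + (1 - 2 / h)) := (hGepSlicing φ A).mp hA
  obtain ⟨e⟩ := hSerre A A
  have hf : ∃ f : A ⟶ S.obj A, f ≠ 0 := by
    by_contra hcon
    push_neg at hcon
    have hs : Subsingleton (A ⟶ S.obj A) := ⟨fun a b => by rw [hcon a, hcon b]⟩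
    have hid : 𝟙 A = (0 : A ⟶ A) := by
      apply e.injective
      ext x
      rw [Subsingleton.elim x (0 : A ⟶ S.obj A)]
      simp
    exact hAne (IsZero.of_iso (isZero_zero C) (by
      exact { hom := 0, inv := 0, hom_inv_id := by simp [← hid], inv_hom_id := by simp }))
  obtain ⟨f0, hf0⟩ := hf
  apply le_antisymm
  · apply sSup_le
    rintro d ⟨φ₁, φ₂, E', F', f, hE', hF', hfne, rfl⟩
    rw [EReal.coe_le_coe_iff]
    by_contra hlt
    push_neg at hlt
    have hSE : S.obj E' ∈ σ.P (φ₁ + (1 - 2 / h)) := (hGepSlicing φ₁ E').mp hE'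
    have hz : ∀ g : F' ⟶ S.obj E', g = 0 :=
      fun g => σ.hom_zero (by linarith) hF' hSE g
    obtain ⟨e'⟩ := hSerre E' F'
    have hs : Subsingleton (F' ⟶ S.obj E') := ⟨fun a b => by rw [hz a, hz b]⟩
    have hfz : f = 0 := by
      apply e'.injective
      ext x
      rw [Subsingleton.elim x (0 : F' ⟶ S.obj E')]
      simp
    exact hfne hfz
  · apply le_sSup
    refine ⟨φ, φ + (1 - 2 / h), A, S.obj A, f0, hA, hSA, hf0, ?_⟩
    congr 1
    ring
end
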